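/- Let (M, E*) be a constrained matrix whose red-black graph G_RB has connected components G_1, …, G_k; each G_i corresponds to a constrained submatrix (M_i, E*_i) induced by the species and characters of G_i, with E*_i the restriction of E* to those pairs. If for every i the red-black graph of (M_i, E*_i) admits a successful c-reduction R_i, then the concatenation R_1 R_2 … R_k is a successful c-reduction of G_RB. -/

import Mathlib

/-! Common definitions for persistent perfect phylogeny formalizations. -/

/-- `AncRel parent i j` : node `i` is an ancestor (or equal to) node `j`
in the rooted tree given by the parent function. -/
def AncRel (parent : ℕ → ℕ) (i j : ℕ) : Prop := ∃ k : ℕ, parent^[k] j = i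

/-- A persistent perfect phylogeny (p-pp) for the binary matrix `M`.
Nodes are `0, …, n-1`, the root is `0`, and each non-root node `i` has
parent `parent i < i`; the (unique) edge entering `i` is identified with `i`. -/
structure PPTree (S C : Type*) (M : S → C → Bool) where
  n : ℕ
  n_pos : 0 < n
  parent : ℕ → ℕ
  parent_lt : ∀ i, 0 < i → i < n → parent i < i
  label : ℕ → C → Bool
  root_label : ∀ c, label 0 c = false
  /-- for each character there are at most two edges across which its state changes -/
  changes_le_two : ∀ c : C, ∀ i j k : ℕ,
    (0 < i ∧ i < n ∧ label (parent i) c ≠ label i c) →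
    (0 < j ∧ j < n ∧ label (parent j) c ≠ label j c) →
    (0 < k ∧ k < n ∧ label (parent k) c ≠ label k c) →
    i = j ∨ i = k ∨ j = k
  /-- two change edges of the same character lie on one root-to-leaf path,
  the higher one being the gain `c⁺` (0→1) and the lower one the loss `c⁻` (1→0) -/
  changes_on_path : ∀ c : C, ∀ i j : ℕ,
    (0 < i ∧ i < n ∧ label (parent i) c ≠ label i c) →
    (0 < j ∧ j < n ∧ label (parent j) c ≠ label j c) →
    i ≠ j →
    (AncRel parent i j ∧ label (parent i) c = false ∧ label i c = true ∧
      label (parent j) c = true ∧ label j c = false) ∨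
    (AncRel parent j i ∧ label (parent j) c = false ∧ label j c = true ∧
      label (parent i) c = true ∧ label i c = false)
  /-- if a character changes on exactly one edge, the change is a gain (0→1) -/
  single_change_gain : ∀ c : C, ∀ i : ℕ,
    (0 < i ∧ i < n ∧ label (parent i) c ≠ label i c) →
    (∀ j : ℕ, (0 < j ∧ j < n ∧ label (parent j) c ≠ label j c) → j = i) →
    (label (parent i) c = false ∧ label i c = true)
  /-- each row of `M` labels exactly one node of the tree -/
  rows_label : ∀ s : S, ∃! x : ℕ, x < n ∧ ∀ c, label x c = M s c

/-- Character `c` is persistent in the node `x`: the path from the root to `x`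
contains both an edge labeled `c⁺` and an edge labeled `c⁻`. -/
def PPTree.persistentAt {S C : Type*} {M : S → C → Bool} (T : PPTree S C M)
    (x : ℕ) (c : C) : Prop :=
  (∃ i, 0 < i ∧ i < T.n ∧ AncRel T.parent i x ∧
    T.label (T.parent i) c = false ∧ T.label i c = true) ∧
  (∃ j, 0 < j ∧ j < T.n ∧ AncRel T.parent j x ∧
    T.label (T.parent j) c = true ∧ T.label j c = false)

/-- A p-pp tree is consistent with the constraint set `E` if, for every
`(s,c) ∈ E`, the character `c` is not persistent in the species `s`. -/
def PPTree.consistent {S C : Type*} {M : S → C → Bool} (T : PPTree S C M)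
    (E : Set (S × C)) : Prop :=
  ∀ p ∈ E, ∀ x : ℕ, x < T.n → (∀ c, T.label x c = M p.1 c) →
    ¬ T.persistentAt x p.2

/-- Two (distinct) characters are in conflict when all four configurations
`(0,0), (0,1), (1,0), (1,1)` occur among the species. -/
def Conflicting {S C : Type*} (M : S → C → Bool) (c₁ c₂ : C) : Prop :=
  c₁ ≠ c₂ ∧
  (∃ s, M s c₁ = false ∧ M s c₂ = false) ∧
  (∃ s, M s c₁ = false ∧ M s c₂ = true) ∧
  (∃ s, M s c₁ = true ∧ M s c₂ = false) ∧
  (∃ s, M s c₁ = true ∧ M s c₂ = true)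

/-- The conflict graph of `M` is empty: no two characters are in conflict. -/
def EmptyConflictGraph {S C : Type*} (M : S → C → Bool) : Prop :=
  ∀ c₁ c₂ : C, ¬ Conflicting M c₁ c₂

/-- The column of a character, as a set of species. -/
def ColSet {S C : Type*} (M : S → C → Bool) (c : C) : Set S := {s | M s c = true}

/-- Column `c⁺` of the completion of the extended matrix of `(M,E)` determined by
the choice function `f` (the pair `(?,?)` of species `s` and character `c` is
completed to `(1,1)` iff `f s c` holds). -/
def ColPlus {S C : Type*} (M : S → C → Bool) (E : Set (S × C))
    (f : S → C → Prop) (c : C) : Set S :=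
  {s | M s c = true ∨ ((s, c) ∉ E ∧ M s c = false ∧ f s c)}

/-- Column `c⁻` of the completion of the extended matrix of `(M,E)` determined by `f`. -/
def ColMinus {S C : Type*} (M : S → C → Bool) (E : Set (S × C))
    (f : S → C → Prop) (c : C) : Set S :=
  {s | (s, c) ∉ E ∧ M s c = false ∧ f s c}

/-- The column of a signed character (`(c, true)` is `c⁺`, `(c, false)` is `c⁻`). -/
def ColOf {S C : Type*} (M : S → C → Bool) (E : Set (S × C))
    (f : S → C → Prop) : C × Bool → Set S :=
  fun p => if p.2 then ColPlus M E f p.1 else ColMinus M E f p.1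

/-- Two sets are laminar: disjoint or one contains the other. -/
def LaminarPair {S : Type*} (X Y : Set S) : Prop := X ∩ Y = ∅ ∨ X ⊆ Y ∨ Y ⊆ X

/-- The completion of the extended matrix of `(M,E)` given by `f` has pairwise
laminar columns, i.e. it admits a rooted (directed) perfect phylogeny. -/
def LaminarCompletion {S C : Type*} (M : S → C → Bool) (E : Set (S × C))
    (f : S → C → Prop) : Prop :=
  ∀ p q : C × Bool, LaminarPair (ColOf M E f p) (ColOf M E f q)

/-- The state of a character in a red-black graph. -/
inductive CharState : Type
  | inactive : CharState
  | active : CharState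
  | free : CharState
deriving DecidableEq

/-- A red-black graph: an edge-bicolored bipartite graph on species and
characters, together with a state for each character and a set of forbidden
(species, character) pairs. -/
structure RBGraph (S C : Type*) where
  black : S → C → Prop
  red : S → C → Prop
  charState : C → CharState
  forbidden : Set (S × C)

/-- The underlying simple graph of a red-black graph (edges of either color). -/
def RBGraph.graph {S C : Type*} (G : RBGraph S C) : SimpleGraph (S ⊕ C) where
  Adj v w :=
    (∃ s c, v = Sum.inl s ∧ w = Sum.inr c ∧ (G.black s c ∨ G.red s c)) ∨
    (∃ s c, w = Sum.inl s ∧ v = Sum.inr c ∧ (G.black s c ∨ G.red s c))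
  symm := ⟨fun v w h => Or.symm h⟩
  loopless := ⟨by
    rintro v (⟨s, c, h₁, h₂, -⟩ | ⟨s, c, h₁, h₂, -⟩) <;> subst h₁ <;> simp at h₂⟩

/-- The subgraph of a red-black graph formed by the red edges only. -/
def RBGraph.redGraph {S C : Type*} (G : RBGraph S C) : SimpleGraph (S ⊕ C) where
  Adj v w :=
    (∃ s c, v = Sum.inl s ∧ w = Sum.inr c ∧ G.red s c) ∨
    (∃ s c, w = Sum.inl s ∧ v = Sum.inr c ∧ G.red s c)
  symm := ⟨fun v w h => Or.symm h⟩
  loopless := ⟨by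
    rintro v (⟨s, c, h₁, h₂, -⟩ | ⟨s, c, h₁, h₂, -⟩) <;> subst h₁ <;> simp at h₂⟩

/-- The species `s` belongs to the connected component `𝒞(c)` of character `c`. -/
def RBGraph.reach {S C : Type*} (G : RBGraph S C) (c : C) (s : S) : Prop :=
  G.graph.Reachable (Sum.inr c) (Sum.inl s)

/-- The realization of character `c` is possible in `G`. -/
def RealizePossible {S C : Type*} (G : RBGraph S C) (c : C) : Prop :=
  match G.charState c with
  | CharState.inactive => ∀ s, G.reach c s → (s, c) ∉ G.forbidden
  | CharState.active => ∀ s, G.reach c s → G.red s c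
  | CharState.free => False

/-- The realization of character `c` in the red-black graph `G`.
If `c` is inactive: add a red edge `{s,c}` for every species `s ∈ 𝒞(c)` not
adjacent to `c`, delete all black edges incident to `c`, forbid `(s,c)` for all
`s ∉ 𝒞(c)`, and make `c` active.  If `c` is active: delete all red edges
incident to `c` and make `c` free. -/
def realize {S C : Type*} [DecidableEq C] (G : RBGraph S C) (c : C) : RBGraph S C :=
  match G.charState c with
  | CharState.inactive =>
    { black := fun s c' => G.black s c' ∧ c' ≠ c
      red := fun s c' =>
        if c' = c then G.red s c ∨ (G.reach c s ∧ ¬ G.black s c ∧ ¬ G.red s c)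
        else G.red s c'
      charState := fun c' => if c' = c then CharState.active else G.charState c'
      forbidden := G.forbidden ∪ {p | p.2 = c ∧ ¬ G.reach c p.1} }
  | CharState.active =>
    { black := G.black
      red := fun s c' => G.red s c' ∧ c' ≠ c
      charState := fun c' => if c' = c then CharState.free else G.charState c'
      forbidden := G.forbidden }
  | CharState.free => G

/-- Realize a sequence of characters, in order. -/
def realizeList {S C : Type*} [DecidableEq C] (G : RBGraph S C) : List C → RBGraph S C
  | [] => G
  | c :: l => realizeList (realize G c) l

/-- All realizations of the sequence, performed in order, are possible. -/
def AllPossible {S C : Type*} [DecidableEq C] (G : RBGraph S C) : List C → Prop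
  | [] => True
  | c :: l => RealizePossible G c ∧ AllPossible (realize G c) l

/-- The initial red-black graph of the constrained matrix `(M, E)`:
a black edge `{s,c}` iff `M s c = 1`, all characters inactive, forbidden set `E`. -/
def initRB {S C : Type*} (M : S → C → Bool) (E : Set (S × C)) : RBGraph S C :=
  { black := fun s c => M s c = true
    red := fun _ _ => False
    charState := fun _ => CharState.inactive
    forbidden := E }

/-- The red-black graph has no edges at all. -/
def Edgeless {S C : Type*} (G : RBGraph S C) : Prop :=
  ∀ (s : S) (c : C), ¬ G.black s c ∧ ¬ G.red s c

/-- A proper sequence of signed characters: each signed character occurs at most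
once, and `c⁻` occurs only after the corresponding `c⁺`. -/
def ProperSigned {C : Type*} [DecidableEq C] (R : List (C × Bool)) : Prop :=
  (∀ σ : C × Bool, R.count σ ≤ 1) ∧
  (∀ c : C, (c, false) ∈ R →
    ∃ i j : Fin R.length, (i : ℕ) < (j : ℕ) ∧ R.get i = (c, true) ∧ R.get j = (c, false))

/-- A successful c-reduction of the red-black graph of `(M, E)`: a proper signed
sequence containing `c⁺` for every character, all of whose realizations are
possible in order, and whose final red-black graph has no edges. -/
def SuccessfulCReduction {S C : Type*} [DecidableEq C] (M : S → C → Bool)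
    (E : Set (S × C)) (R : List (C × Bool)) : Prop :=
  ProperSigned R ∧ (∀ c : C, (c, true) ∈ R) ∧
  AllPossible (initRB M E) (R.map Prod.fst) ∧
  Edgeless (realizeList (initRB M E) (R.map Prod.fst))

/-- The canonical completion of the extended matrix of `(M,E)` associated with a
successful c-reduction `R`: at the first realization of each character `c`, the
pair of species `s` and character `c` is completed to `(1,1)` iff `s ∈ 𝒞(c)` at
that moment. -/
def canonComp {S C : Type*} [DecidableEq C] (M : S → C → Bool) (E : Set (S × C))
    (R : List (C × Bool)) : S → C → Prop :=
  fun s c =>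
    (realizeList (initRB M E)
      ((R.takeWhile (fun p => decide (p ≠ (c, true)))).map Prod.fst)).reach c s

/-- `L` is a label sequence of node `x` of the p-pp tree `T`: it lists, without
repetition and in root-to-`x` order, exactly the signed characters labeling the
edges on the path from the root to `x` (`(c, true)` stands for `c⁺`,
`(c, false)` for `c⁻`). -/
def IsLabelSeq {S C : Type*} {M : S → C → Bool} (T : PPTree S C M) (x : ℕ)
    (L : List (C × Bool)) : Prop :=
  L.Nodup ∧
  (∀ σ : C × Bool, σ ∈ L ↔ ∃ i, 0 < i ∧ i < T.n ∧ AncRel T.parent i x ∧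
    T.label (T.parent i) σ.1 = (!σ.2) ∧ T.label i σ.1 = σ.2) ∧
  (∀ p q : Fin L.length, (p : ℕ) < (q : ℕ) → ∀ i j : ℕ,
    (0 < i ∧ i < T.n ∧ AncRel T.parent i x ∧
      T.label (T.parent i) (L.get p).1 = (!(L.get p).2) ∧
      T.label i (L.get p).1 = (L.get p).2) →
    (0 < j ∧ j < T.n ∧ AncRel T.parent j x ∧
      T.label (T.parent j) (L.get q).1 = (!(L.get q).2) ∧
      T.label j (L.get q).1 = (L.get q).2) →
    AncRel T.parent i j)

/-- A solution of a General Character Compatibility instance (with all character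
trees equal to the directed path `0 → 1 → 2`). -/
structure GCCSolution (S C : Type*) (α : C → S → Set (Fin 3)) where
  n : ℕ
  n_pos : 0 < n
  parent : ℕ → ℕ
  parent_lt : ∀ i, 0 < i → i < n → parent i < i
  st : ℕ → C → Fin 3
  /-- every species has a node whose states belong to the prescribed sets -/
  species_node : ∀ s : S, ∃ v : ℕ, v < n ∧ ∀ c : C, st v c ∈ α c s
  /-- for each character and state, the nodes carrying that state induce a
  connected subtree: any two of them are joined by a path inside the set,
  through a common ancestor carrying the same state -/
  state_connected : ∀ (c : C) (q : Fin 3) (u v : ℕ), u < n → v < n →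
    st u c = q → st v c = q →
    ∃ r : ℕ, r < n ∧ st r c = q ∧ AncRel parent r u ∧ AncRel parent r v ∧
      (∀ w : ℕ, AncRel parent r w → AncRel parent w u → st w c = q) ∧
      (∀ w : ℕ, AncRel parent r w → AncRel parent w v → st w c = q)
  /-- along each edge a state is unchanged or moves one step along `0 → 1 → 2` -/
  edge_ok : ∀ (c : C) (i : ℕ), 0 < i → i < n →
    st (parent i) c = st i c ∨
    (st (parent i) c = 0 ∧ st i c = 1) ∨
    (st (parent i) c = 1 ∧ st i c = 2)

/-!
Realizations only ever add edges between a character and species of its current component, so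
every edge of a graph reached from `initRB M E` joins two vertices of one component of
`initRB M E`. Hence the part of the graph inside a component `K` is left untouched by realizing
characters outside `K`, and under realizations of characters of `K` it evolves exactly like the
red-black graph of the submatrix `(M_K, E*_K)`, with the same realizations possible. Performing the
reductions `R_K` one after the other thus replays each of them on its own component, and every
component, hence the whole graph, ends up without edges.
-/

namespace List

lemma pair_sublist_iff_exists_get {α : Type*} {l : List α} {a b : α} :
    [a, b] <+ l ↔ ∃ i j : Fin l.length, (i : ℕ) < j ∧ l.get i = a ∧ l.get j = b := by
  rw [sublist_iff_exists_fin_orderEmbedding_get_eq]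
  constructor
  · rintro ⟨f, hf⟩
    exact ⟨f ⟨0, by simp⟩, f ⟨1, by simp⟩, f.lt_iff_lt.2 Nat.zero_lt_one,
      (hf _).symm, (hf _).symm⟩
  · rintro ⟨i, j, hij, rfl, rfl⟩
    refine ⟨OrderEmbedding.ofStrictMono (fun k => if (k : ℕ) = 0 then i else j) ?_, ?_⟩
    · rintro ⟨k, hk⟩ ⟨k', hk'⟩ h
      simp only [length_cons, length_nil] at hk hk'
      interval_cases k <;> interval_cases k' <;> simp_all
    · rintro ⟨k, hk⟩
      simp only [length_cons, length_nil] at hk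
      interval_cases k <;> simp

end List

section ProperSigned

variable {C D : Type*} [DecidableEq C] [DecidableEq D]

lemma properSigned_iff {R : List (C × Bool)} :
    ProperSigned R ↔ R.Nodup ∧ ∀ c, (c, false) ∈ R → [(c, true), (c, false)].Sublist R := by
  simp only [ProperSigned, List.pair_sublist_iff_exists_get, List.nodup_iff_count_le_one]

lemma ProperSigned.map {R : List (C × Bool)} (hR : ProperSigned R) {f : C → D}
    (hf : Function.Injective f) : ProperSigned (R.map (Prod.map f id)) := by
  rw [properSigned_iff] at hR ⊢
  refine ⟨hR.1.map (hf.prodMap Function.injective_id), fun d hd => ?_⟩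
  obtain ⟨⟨c, b⟩, hc, hcd⟩ := List.mem_map.1 hd
  obtain ⟨rfl, rfl⟩ := Prod.mk.inj hcd
  exact (hR.2 c hc).map (Prod.map f id)

lemma ProperSigned.flatten {L : List (List (C × Bool))} (hL : ∀ R ∈ L, ProperSigned R)
    (hd : L.Pairwise List.Disjoint) : ProperSigned L.flatten := by
  rw [properSigned_iff]
  refine ⟨List.nodup_flatten.2 ⟨fun R hR => (properSigned_iff.1 (hL R hR)).1, hd⟩,
    fun c hc => ?_⟩
  obtain ⟨R, hR, hcR⟩ := List.mem_flatten.1 hc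
  exact ((properSigned_iff.1 (hL R hR)).2 c hcR).trans (List.sublist_flatten_of_mem hR)

end ProperSigned

section

variable {S C : Type*} [DecidableEq C]

lemma realizeList_append (G : RBGraph S C) (l₁ l₂ : List C) :
    realizeList G (l₁ ++ l₂) = realizeList (realizeList G l₁) l₂ := by
  induction l₁ generalizing G with
  | nil => rfl
  | cons c l ih => exact ih (realize G c)

lemma allPossible_append (G : RBGraph S C) (l₁ l₂ : List C) :
    AllPossible G (l₁ ++ l₂) ↔ AllPossible G l₁ ∧ AllPossible (realizeList G l₁) l₂ := by
  induction l₁ generalizing G with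
  | nil => simp [AllPossible, realizeList]
  | cons c l ih => simp [AllPossible, realizeList, ih, and_assoc]

end

attribute [ext] RBGraph

namespace RBGraph

variable {S C ι : Type*} {G : RBGraph S C} {κ : S ⊕ C → ι} {K : ι}

@[simp]
lemma graph_adj_inl_inr (s : S) (c : C) :
    G.graph.Adj (.inl s) (.inr c) ↔ G.black s c ∨ G.red s c := by
  simp [graph]

@[simp]
lemma graph_adj_inr_inl (c : C) (s : S) :
    G.graph.Adj (.inr c) (.inl s) ↔ G.black s c ∨ G.red s c := by
  simp [graph]

@[simp]
lemma not_graph_adj_inl_inl (s s' : S) : ¬ G.graph.Adj (.inl s) (.inl s') := by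
  simp [graph]

@[simp]
lemma not_graph_adj_inr_inr (c c' : C) : ¬ G.graph.Adj (.inr c) (.inr c') := by
  simp [graph]

def EdgesWithin (G : RBGraph S C) (κ : S ⊕ C → ι) : Prop :=
  ∀ s c, G.black s c ∨ G.red s c → κ (.inl s) = κ (.inr c)

lemma edgesWithin_connectedComponentMk (G : RBGraph S C) :
    G.EdgesWithin G.graph.connectedComponentMk := fun s c h =>
  SimpleGraph.ConnectedComponent.sound (SimpleGraph.Adj.reachable (by simpa using h))

lemma EdgesWithin.eq_of_adj (hG : G.EdgesWithin κ) {v w : S ⊕ C} (h : G.graph.Adj v w) :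
    κ v = κ w := by
  rcases v with s | c <;> rcases w with s' | c' <;>
    simp only [graph_adj_inl_inr, graph_adj_inr_inl, not_graph_adj_inl_inl,
      not_graph_adj_inr_inr] at h
  · exact hG s c' h
  · exact (hG s' c h).symm

lemma EdgesWithin.eq_of_reachable (hG : G.EdgesWithin κ) {v w : S ⊕ C}
    (h : G.graph.Reachable v w) : κ v = κ w := by
  obtain ⟨p⟩ := h
  induction p with
  | nil => rfl
  | cons h _ ih => exact (hG.eq_of_adj h).trans ih

def restrict (G : RBGraph S C) (κ : S ⊕ C → ι) (K : ι) :
    RBGraph {s // κ (.inl s) = K} {c // κ (.inr c) = K} where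
  black s c := G.black s c
  red s c := G.red s c
  charState c := G.charState c
  forbidden := {p | (p.1.1, p.2.1) ∈ G.forbidden}

lemma initRB_restrict (M : S → C → Bool) (E : Set (S × C)) (κ : S ⊕ C → ι) (K : ι) :
    (initRB M E).restrict κ K =
      initRB (fun s c => M s.1 c.1) {p | (p.1.1, p.2.1) ∈ E} :=
  rfl

def restrictHom (G : RBGraph S C) (κ : S ⊕ C → ι) (K : ι) :
    (G.restrict κ K).graph →g G.graph where
  toFun := Sum.map Subtype.val Subtype.val
  map_rel' := by
    rintro (s | c) (s' | c') h <;> simp_all [restrict]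

lemma EdgesWithin.exists_adj_restrict (hG : G.EdgesWithin κ)
    {v : {s // κ (.inl s) = K} ⊕ {c // κ (.inr c) = K}} {w : S ⊕ C}
    (h : G.graph.Adj (Sum.map Subtype.val Subtype.val v) w) :
    ∃ w', Sum.map Subtype.val Subtype.val w' = w ∧ (G.restrict κ K).graph.Adj v w' := by
  have hw : κ w = K :=
    (hG.eq_of_adj h).symm.trans (by rcases v with ⟨s, hs⟩ | ⟨c, hc⟩ <;> assumption)
  rcases v with s | c <;> rcases w with s' | c' <;>
    simp only [Sum.map_inl, Sum.map_inr, graph_adj_inl_inr, graph_adj_inr_inl,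
      not_graph_adj_inl_inl, not_graph_adj_inr_inr] at h
  · exact ⟨.inr ⟨c', hw⟩, rfl, by simpa [restrict] using h⟩
  · exact ⟨.inl ⟨s', hw⟩, rfl, by simpa [restrict] using h⟩

lemma EdgesWithin.reachable_restrict_of_walk (hG : G.EdgesWithin κ) {v w : S ⊕ C}
    (p : G.graph.Walk v w) (v' : {s // κ (.inl s) = K} ⊕ {c // κ (.inr c) = K})
    (hv : Sum.map Subtype.val Subtype.val v' = v) :
    ∃ w', Sum.map Subtype.val Subtype.val w' = w ∧ (G.restrict κ K).graph.Reachable v' w' := by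
  induction p generalizing v' with
  | nil => exact ⟨v', hv, .rfl⟩
  | cons h _ ih =>
    subst hv
    obtain ⟨u', rfl, hu'⟩ := hG.exists_adj_restrict h
    obtain ⟨w', hw', hr⟩ := ih u' rfl
    exact ⟨w', hw', hu'.reachable.trans hr⟩

lemma EdgesWithin.reach_restrict_iff (hG : G.EdgesWithin κ) (c : {c // κ (.inr c) = K})
    (s : {s // κ (.inl s) = K}) : (G.restrict κ K).reach c s ↔ G.reach c.1 s.1 := by
  refine ⟨fun h => h.map (G.restrictHom κ K), fun ⟨p⟩ => ?_⟩
  obtain ⟨w', hw', hr⟩ := hG.reachable_restrict_of_walk p (.inr c) rfl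
  rcases w' with s' | c' <;> simp only [Sum.map_inl, Sum.map_inr, Sum.inl.injEq,
    reduceCtorEq] at hw'
  rwa [show s = s' from Subtype.ext hw'.symm]

lemma EdgesWithin.forall_reach_iff (hG : G.EdgesWithin κ) (c : {c // κ (.inr c) = K})
    (P : S → Prop) :
    (∀ s, G.reach c.1 s → P s) ↔ ∀ s, (G.restrict κ K).reach c s → P s.1 := by
  refine ⟨fun h s hs => h s.1 ((hG.reach_restrict_iff c s).1 hs), fun h s hs => ?_⟩
  have hsK : κ (.inl s) = K := (hG.eq_of_reachable hs).symm.trans c.2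
  exact h ⟨s, hsK⟩ ((hG.reach_restrict_iff c ⟨s, hsK⟩).2 hs)

lemma EdgesWithin.realizePossible_restrict_iff (hG : G.EdgesWithin κ)
    (c : {c // κ (.inr c) = K}) :
    RealizePossible (G.restrict κ K) c ↔ RealizePossible G c.1 := by
  rcases h : G.charState c.1 <;>
    simp [RealizePossible, restrict, h, hG.forall_reach_iff c]

lemma EdgesWithin.edgeless_of_restrict (hG : G.EdgesWithin κ)
    (h : ∀ K, Edgeless (G.restrict κ K)) : Edgeless G := by
  intro s c
  by_cases hsc : κ (.inl s) = κ (.inr c)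
  · exact h (κ (.inr c)) ⟨s, hsc⟩ ⟨c, rfl⟩
  · exact ⟨fun hb => hsc (hG s c (.inl hb)), fun hr => hsc (hG s c (.inr hr))⟩

variable {ks : List ι} (l : ∀ K, List {c // κ (.inr c) = K})

lemma forall_mem_map_val_ne {K' : ι} (hK : K' ≠ K) :
    ∀ c ∈ (l K').map Subtype.val, κ (.inr c) ≠ K := by
  simp only [List.mem_map]
  rintro _ ⟨c, -, rfl⟩ h
  exact hK (c.2.symm.trans h)

lemma forall_mem_flatMap_ne (hK : K ∉ ks) :
    ∀ c ∈ ks.flatMap (fun K => (l K).map Subtype.val), κ (.inr c) ≠ K := by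
  simp only [List.mem_flatMap]
  rintro c ⟨K', hK', hc⟩
  exact forall_mem_map_val_ne l (ne_of_mem_of_not_mem hK' hK) c hc

variable [DecidableEq C]

lemma EdgesWithin.realize (hG : G.EdgesWithin κ) (c : C) : (realize G c).EdgesWithin κ := by
  intro s c' h
  rcases hc : G.charState c <;> simp only [_root_.realize, hc] at h
  · by_cases hcc : c' = c
    · subst hcc
      simp only [if_pos] at h
      rcases h with h | h | ⟨hr, -⟩
      exacts [hG s c' (.inl h.1), hG s c' (.inr h), (hG.eq_of_reachable hr).symm]
    · simp only [hcc, if_false] at h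
      exact hG s c' (h.imp And.left id)
  · exact hG s c' (h.imp id And.left)
  · exact hG s c' h

lemma EdgesWithin.realizeList (hG : G.EdgesWithin κ) (l : List C) :
    (realizeList G l).EdgesWithin κ := by
  induction l generalizing G with
  | nil => exact hG
  | cons c l ih => exact ih (hG.realize c)

lemma restrict_realize_of_ne {c : C} (hc : κ (.inr c) ≠ K) :
    (realize G c).restrict κ K = G.restrict κ K := by
  have hne : ∀ c' : {c // κ (.inr c) = K}, c'.1 ≠ c := fun c' h => hc (h ▸ c'.2)
  rcases h : G.charState c <;>
    ext <;> simp [_root_.realize, restrict, h, hne]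

lemma EdgesWithin.restrict_realize (hG : G.EdgesWithin κ) (c : {c // κ (.inr c) = K}) :
    (_root_.realize G c.1).restrict κ K = _root_.realize (G.restrict κ K) c := by
  rcases h : G.charState c.1 <;>
    ext <;> simp [_root_.realize, restrict, h, Subtype.ext_iff, ← hG.reach_restrict_iff]

lemma restrict_realizeList_of_forall_ne {l : List C} (hl : ∀ c ∈ l, κ (.inr c) ≠ K) :
    (realizeList G l).restrict κ K = G.restrict κ K := by
  induction l generalizing G with
  | nil => rfl
  | cons c l ih =>
    simp only [List.forall_mem_cons] at hl
    exact (ih hl.2).trans (restrict_realize_of_ne hl.1)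

lemma EdgesWithin.restrict_realizeList (hG : G.EdgesWithin κ) (l : List {c // κ (.inr c) = K}) :
    (_root_.realizeList G (l.map Subtype.val)).restrict κ K =
      _root_.realizeList (G.restrict κ K) l := by
  induction l generalizing G with
  | nil => rfl
  | cons c l ih =>
    simp only [List.map_cons, _root_.realizeList, ← hG.restrict_realize c]
    exact ih (hG.realize c.1)

lemma EdgesWithin.allPossible_restrict_iff (hG : G.EdgesWithin κ)
    (l : List {c // κ (.inr c) = K}) :
    AllPossible (G.restrict κ K) l ↔ AllPossible G (l.map Subtype.val) := by
  induction l generalizing G with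
  | nil => exact Iff.rfl
  | cons c l ih =>
    simp only [List.map_cons, AllPossible, ← hG.restrict_realize c,
      hG.realizePossible_restrict_iff, ih (hG.realize c.1)]

lemma EdgesWithin.restrict_realizeList_flatMap (hG : G.EdgesWithin κ) (hks : ks.Nodup)
    (hK : K ∈ ks) :
    (_root_.realizeList G (ks.flatMap fun K => (l K).map Subtype.val)).restrict κ K =
      _root_.realizeList (G.restrict κ K) (l K) := by
  induction ks generalizing G with
  | nil => simp at hK
  | cons K' ks ih =>
    rw [List.nodup_cons] at hks
    rw [List.flatMap_cons, realizeList_append]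
    rcases List.mem_cons.1 hK with rfl | hK
    · rw [restrict_realizeList_of_forall_ne (forall_mem_flatMap_ne l hks.1),
        hG.restrict_realizeList]
    · rw [ih (hG.realizeList _) hks.2 hK, restrict_realizeList_of_forall_ne
        (forall_mem_map_val_ne l (ne_of_mem_of_not_mem hK hks.1).symm)]

lemma EdgesWithin.allPossible_flatMap (hG : G.EdgesWithin κ) (hks : ks.Nodup)
    (hA : ∀ K ∈ ks, AllPossible (G.restrict κ K) (l K)) :
    AllPossible G (ks.flatMap fun K => (l K).map Subtype.val) := by
  induction ks generalizing G with
  | nil => trivial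
  | cons K ks ih =>
    rw [List.nodup_cons] at hks
    rw [List.flatMap_cons, allPossible_append]
    refine ⟨(hG.allPossible_restrict_iff _).1 (hA K List.mem_cons_self),
      ih (hG.realizeList _) hks.2 fun K' hK' => ?_⟩
    rw [restrict_realizeList_of_forall_ne
      (forall_mem_map_val_ne l (ne_of_mem_of_not_mem hK' hks.1).symm)]
    exact hA K' (List.mem_cons_of_mem K hK')

end RBGraph

theorem stmt10_general {S C : Type*} [DecidableEq C]
    (M : S → C → Bool) (E : Set (S × C))
    (comps : List (initRB M E).graph.ConnectedComponent)
    (hnodup : comps.Nodup)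
    (hall : ∀ K : (initRB M E).graph.ConnectedComponent, K ∈ comps)
    (R : ∀ K : (initRB M E).graph.ConnectedComponent,
      List ({c : C // (initRB M E).graph.connectedComponentMk (Sum.inr c) = K} × Bool))
    (hR : ∀ K : (initRB M E).graph.ConnectedComponent,
      SuccessfulCReduction
        (fun (s : {s : S // (initRB M E).graph.connectedComponentMk (Sum.inl s) = K})
             (c : {c : C // (initRB M E).graph.connectedComponentMk (Sum.inr c) = K}) =>
          M s.1 c.1)
        {p : {s : S // (initRB M E).graph.connectedComponentMk (Sum.inl s) = K} ×
             {c : C // (initRB M E).graph.connectedComponentMk (Sum.inr c) = K} |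
          (p.1.1, p.2.1) ∈ E}
        (R K)) :
    SuccessfulCReduction M E
      ((comps.map fun K => (R K).map fun p => (p.1.1, p.2)).flatten) := by
  have hG := (initRB M E).edgesWithin_connectedComponentMk
  have hchars : ((comps.map fun K => (R K).map fun p => (p.1.1, p.2)).flatten).map Prod.fst =
      comps.flatMap fun K => ((R K).map Prod.fst).map Subtype.val := by
    simp [List.map_flatten, List.flatMap_def, Function.comp_def]
  refine ⟨ProperSigned.flatten ?_ ?_, fun c => ?_, ?_, ?_⟩
  · simp only [List.mem_map]
    rintro _ ⟨K, -, rfl⟩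
    exact (hR K).1.map Subtype.val_injective
  · refine List.pairwise_map.2 (hnodup.imp fun hne => List.disjoint_left.2 ?_)
    simp only [List.mem_map]
    rintro _ ⟨⟨c, b⟩, -, rfl⟩ ⟨⟨c', b'⟩, -, hcc⟩
    exact hne (c.2.symm.trans ((Prod.mk.inj hcc).1 ▸ c'.2))
  · exact List.mem_flatten.2 ⟨_, List.mem_map_of_mem (hall _),
      List.mem_map_of_mem (f := fun p => (p.1.1, p.2)) ((hR _).2.1 ⟨c, rfl⟩)⟩
  · rw [hchars]
    exact hG.allPossible_flatMap _ hnodup fun K _ => (hR K).2.2.1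
  · rw [hchars]
    refine (hG.realizeList _).edgeless_of_restrict fun K => ?_
    rw [hG.restrict_realizeList_flatMap _ hnodup (hall K), RBGraph.initRB_restrict]
    exact (hR K).2.2.2

/-- if each connected component of the red-black graph of
`(M, E)`, viewed as the constrained submatrix induced by its species and
characters, admits a successful c-reduction, then the concatenation of these
reductions (over an enumeration of the components) is a successful c-reduction
of the red-black graph of `(M, E)`. -/
theorem stmt10 {S C : Type*} [Fintype S] [Fintype C] [DecidableEq C]
    (M : S → C → Bool) (E : Set (S × C))
    (hE : ∀ p ∈ E, M p.1 p.2 = false)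
    (comps : List (initRB M E).graph.ConnectedComponent)
    (hnodup : comps.Nodup)
    (hall : ∀ K : (initRB M E).graph.ConnectedComponent, K ∈ comps)
    (R : ∀ K : (initRB M E).graph.ConnectedComponent,
      List ({c : C // (initRB M E).graph.connectedComponentMk (Sum.inr c) = K} × Bool))
    (hR : ∀ K : (initRB M E).graph.ConnectedComponent,
      SuccessfulCReduction
        (fun (s : {s : S // (initRB M E).graph.connectedComponentMk (Sum.inl s) = K})
             (c : {c : C // (initRB M E).graph.connectedComponentMk (Sum.inr c) = K}) =>
          M s.1 c.1)
        {p : {s : S // (initRB M E).graph.connectedComponentMk (Sum.inl s) = K} ×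
             {c : C // (initRB M E).graph.connectedComponentMk (Sum.inr c) = K} |
          (p.1.1, p.2.1) ∈ E}
        (R K)) :
    SuccessfulCReduction M E
      ((comps.map fun K => (R K).map fun p => (p.1.1, p.2)).flatten) :=
  stmt10_general M E comps hnodup hall R hR
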